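/- arXiv:1102.4821 — 4 statements merged into one kernel-verified Lean document; each statement's English description precedes it below -/
import Mathlib

section
/- For any n×n real matrix Y, the vector s = (1/n) Y e minimizes ‖Y - (s eᵀ - e sᵀ)‖_F over all centered vectors s (sᵀe = 0), when Y is skew-symmetric. -/
open Matrix

/-! With `A = Y - (s₀ eᵀ - e s₀ᵀ)`, every competitor is `A - (d eᵀ - e dᵀ)` with `d = s - s₀`.
Skew-symmetry of `Y` makes `s₀` centered, hence `A` has zero row sums and, being skew, zero
column sums. Such an `A` is Frobenius-orthogonal to every `d eᵀ - e dᵀ`, so Pythagoras gives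
`‖A‖_F ≤ ‖A - (d eᵀ - e dᵀ)‖_F`. -/

noncomputable def frobNorm {n : ℕ} (M : Matrix (Fin n) (Fin n) ℝ) : ℝ :=
  Real.sqrt (∑ i, ∑ j, (M i j) ^ 2)

section

variable {ι : Type*}

lemma transpose_vecMulVec_sub_vecMulVec (s t : ι → ℝ) :
    (vecMulVec s t - vecMulVec t s)ᵀ = -(vecMulVec s t - vecMulVec t s) := by
  rw [transpose_sub, transpose_vecMulVec, transpose_vecMulVec, neg_sub]

variable [Fintype ι]

lemma sum_sum_mul_sub_eq_zero {A : ι → ι → ℝ} (hrow : ∀ i, ∑ j, A i j = 0)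
    (hcol : ∀ j, ∑ i, A i j = 0) (d : ι → ℝ) : ∑ i, ∑ j, A i j * (d i - d j) = 0 := by
  simp only [mul_sub, Finset.sum_sub_distrib]
  rw [Finset.sum_comm (f := fun i j => A i j * d j)]
  simp only [← Finset.sum_mul, hrow, hcol, zero_mul, Finset.sum_const_zero, sub_zero]

lemma sum_sum_sq_le_sum_sum_sq_sub_sub {A : ι → ι → ℝ} (hrow : ∀ i, ∑ j, A i j = 0)
    (hcol : ∀ j, ∑ i, A i j = 0) (d : ι → ℝ) :
    ∑ i, ∑ j, A i j ^ 2 ≤ ∑ i, ∑ j, (A i j - (d i - d j)) ^ 2 := by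
  have hexpand : ∑ i, ∑ j, (A i j - (d i - d j)) ^ 2 = ∑ i, ∑ j, A i j ^ 2
      - 2 * ∑ i, ∑ j, A i j * (d i - d j) + ∑ i, ∑ j, (d i - d j) ^ 2 := by
    simp only [Finset.mul_sum, ← Finset.sum_sub_distrib, ← Finset.sum_add_distrib]
    exact Finset.sum_congr rfl fun i _ => Finset.sum_congr rfl fun j _ => by ring
  have hd : 0 ≤ ∑ i, ∑ j, (d i - d j) ^ 2 := by positivity
  rw [hexpand, sum_sum_mul_sub_eq_zero hrow hcol]
  linarith

lemma sum_apply_eq_zero_of_transpose_eq_neg {A : Matrix ι ι ℝ} (hA : Aᵀ = -A)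
    (hrow : ∀ i, ∑ j, A i j = 0) (j : ι) : ∑ i, A i j = 0 := by
  have h : ∀ i, A i j = -A j i := fun i => by
    rw [← neg_apply, ← hA, transpose_apply]
  simp only [h, Finset.sum_neg_distrib, hrow, neg_zero]

lemma dotProduct_mulVec_self_eq_zero_of_transpose_eq_neg {A : Matrix ι ι ℝ} (hA : Aᵀ = -A)
    (x : ι → ℝ) : x ⬝ᵥ A *ᵥ x = 0 := by
  have h : x ⬝ᵥ A *ᵥ x = -(x ⬝ᵥ A *ᵥ x) :=
    calc x ⬝ᵥ A *ᵥ x = x ᵥ* A ⬝ᵥ x := dotProduct_mulVec x A x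
      _ = -(A *ᵥ x) ⬝ᵥ x := by rw [← vecMul_transpose, hA, vecMul_neg, neg_neg]
      _ = -(x ⬝ᵥ A *ᵥ x) := by rw [neg_dotProduct, dotProduct_comm]
  linarith

lemma sum_smul_mulVec_one_eq_zero_of_transpose_eq_neg {Y : Matrix ι ι ℝ} (hY : Yᵀ = -Y)
    (c : ℝ) : ∑ i, (c • Y *ᵥ 1) i = 0 := by
  rw [← one_dotProduct, dotProduct_smul, dotProduct_mulVec_self_eq_zero_of_transpose_eq_neg hY,
    smul_zero]

lemma sum_sub_vecMulVec_row_mean_eq_zero {Y : Matrix ι ι ℝ} (hY : Yᵀ = -Y) {s₀ : ι → ℝ}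
    (hs₀ : s₀ = (1 / (Fintype.card ι : ℝ)) • Y *ᵥ 1) (i : ι) :
    ∑ j, (Y - (vecMulVec s₀ 1 - vecMulVec 1 s₀) : Matrix ι ι ℝ) i j = 0 := by
  have hsum : ∑ j, s₀ j = 0 := hs₀ ▸ sum_smul_mulVec_one_eq_zero_of_transpose_eq_neg hY _
  have hcard : (Fintype.card ι : ℝ) ≠ 0 := by
    have : Nonempty ι := ⟨i⟩
    positivity
  simp only [Matrix.sub_apply, vecMulVec_apply, Pi.one_apply, mul_one, one_mul,
    Finset.sum_sub_distrib, hsum, Finset.sum_const, Finset.card_univ, nsmul_eq_mul]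
  subst hs₀
  simp [mulVec, dotProduct, hcard]

end

theorem row_mean_minimizes_general (n : ℕ) (Y : Matrix (Fin n) (Fin n) ℝ)
    (hY : Yᵀ = -Y) (e : Fin n → ℝ) (he : e = fun _ => 1)
    (s₀ : Fin n → ℝ) (hs₀ : s₀ = (1 / (n : ℝ)) • Y.mulVec e) :
    (∑ i, s₀ i = 0) ∧
    ∀ s : Fin n → ℝ, (∑ i, s i = 0) →
      frobNorm (Y - (vecMulVec s₀ e - vecMulVec e s₀))
        ≤ frobNorm (Y - (vecMulVec s e - vecMulVec e s)) := by
  obtain rfl : e = 1 := he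
  refine ⟨hs₀ ▸ sum_smul_mulVec_one_eq_zero_of_transpose_eq_neg hY _, fun s _ => ?_⟩
  set A := Y - (vecMulVec s₀ 1 - vecMulVec 1 s₀) with hA_def
  have hA : Aᵀ = -A := by
    rw [hA_def, transpose_sub, hY, transpose_vecMulVec_sub_vecMulVec, neg_sub_neg, neg_sub]
  have hrow : ∀ i, ∑ j, A i j = 0 :=
    sum_sub_vecMulVec_row_mean_eq_zero hY (by rw [hs₀, Fintype.card_fin])
  have hcol : ∀ j, ∑ i, A i j = 0 := sum_apply_eq_zero_of_transpose_eq_neg hA hrow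
  have hshift : ∀ i j, (Y - (vecMulVec s 1 - vecMulVec 1 s) : Matrix (Fin n) (Fin n) ℝ) i j
      = A i j - ((s - s₀) i - (s - s₀) j) := fun i j => by
    simp only [A, Matrix.sub_apply, vecMulVec_apply, Pi.sub_apply, Pi.one_apply, mul_one, one_mul]
    ring
  simp only [frobNorm, hshift]
  exact Real.sqrt_le_sqrt (sum_sum_sq_le_sum_sum_sq_sub_sub hrow hcol (s - s₀))

/-- For a skew-symmetric `Y`, the vector `s₀ = (1/n) Y e` is centered and minimizes
`‖Y - (s eᵀ - e sᵀ)‖_F` over all centered vectors `s`. -/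
theorem row_mean_minimizes (n : ℕ) (hn : 0 < n) (Y : Matrix (Fin n) (Fin n) ℝ)
    (hY : Yᵀ = -Y) (e : Fin n → ℝ) (he : e = fun _ => 1)
    (s₀ : Fin n → ℝ) (hs₀ : s₀ = (1 / (n : ℝ)) • Y.mulVec e) :
    (∑ i, s₀ i = 0) ∧
    ∀ s : Fin n → ℝ, (∑ i, s i = 0) →
      frobNorm (Y - (vecMulVec s₀ e - vecMulVec e s₀))
        ≤ frobNorm (Y - (vecMulVec s e - vecMulVec e s)) :=
  row_mean_minimizes_general n Y hY e he s₀ hs₀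
end

section
/- The nuclear norm of the rank-2 matrix Y = s eᵀ - e sᵀ with sᵀe = 0 equals 2√n ‖s‖₂. -/
/-!
Since `s ⊥ e`, the Gram matrix `G = YᵀY` equals `‖e‖² s sᵀ + ‖s‖² e eᵀ`, and
`G² = c G` with `c = ‖s‖² ‖e‖² = n ‖s‖²`. Hence every eigenvalue `λ` of `G` is `0` or `c`, so
`√λ = λ / √c`, and the sum of the singular values of `Y` is `tr G / √c = 2c / √c = 2 √c`.
-/

open Matrix

namespace Matrix

section Gram

variable {R ι : Type*} [CommRing R] [Fintype ι]

theorem transpose_mul_self_vecMulVec_sub_vecMulVec {u v : ι → R} (huv : u ⬝ᵥ v = 0) :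
    (vecMulVec u v - vecMulVec v u)ᵀ * (vecMulVec u v - vecMulVec v u)
      = (v ⬝ᵥ v) • vecMulVec u u + (u ⬝ᵥ u) • vecMulVec v v := by
  have hvu : v ⬝ᵥ u = 0 := by rwa [dotProduct_comm]
  simp only [transpose_sub, transpose_vecMulVec, sub_mul, mul_sub, vecMulVec_mul_vecMulVec,
    huv, hvu, zero_smul, vecMulVec_smul, vecMulVec_zero, sub_zero, zero_sub, sub_neg_eq_add]
  abel

theorem mul_self_smul_vecMulVec_add_smul_vecMulVec {u v : ι → R} (huv : u ⬝ᵥ v = 0) :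
    ((v ⬝ᵥ v) • vecMulVec u u + (u ⬝ᵥ u) • vecMulVec v v)
        * ((v ⬝ᵥ v) • vecMulVec u u + (u ⬝ᵥ u) • vecMulVec v v)
      = ((u ⬝ᵥ u) * (v ⬝ᵥ v)) • ((v ⬝ᵥ v) • vecMulVec u u + (u ⬝ᵥ u) • vecMulVec v v) := by
  have hvu : v ⬝ᵥ u = 0 := by rwa [dotProduct_comm]
  simp only [add_mul, mul_add, smul_mul_smul_comm, vecMulVec_mul_vecMulVec, huv, hvu, zero_smul,
    vecMulVec_smul, vecMulVec_zero, smul_zero, add_zero, zero_add, smul_add, smul_smul]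
  congr 2 <;> ring

theorem trace_smul_vecMulVec_add_smul_vecMulVec (u v : ι → R) :
    ((v ⬝ᵥ v) • vecMulVec u u + (u ⬝ᵥ u) • vecMulVec v v).trace = 2 * ((u ⬝ᵥ u) * (v ⬝ᵥ v)) := by
  simp only [trace_add, trace_smul, trace_vecMulVec, smul_eq_mul]
  ring

end Gram

section Spectrum

variable {𝕜 ι : Type*} [RCLike 𝕜] [Fintype ι] [DecidableEq ι]

theorem IsHermitian.eigenvalues_eq_zero_or_eq_of_mul_self_eq_smul {A : Matrix ι ι 𝕜}
    (hA : A.IsHermitian) {c : ℝ} (h : A * A = c • A) (i : ι) :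
    hA.eigenvalues i = 0 ∨ hA.eigenvalues i = c := by
  set v : ι → 𝕜 := ⇑(hA.eigenvectorBasis i)
  set μ := hA.eigenvalues i
  have hv : v ≠ 0 := (WithLp.ofLp_eq_zero 2).ne.2 <| hA.eigenvectorBasis.orthonormal.ne_zero i
  have hAv : A *ᵥ v = μ • v := hA.mulVec_eigenvectorBasis i
  have hμ : (μ * (μ - c)) • v = 0 := by
    have h₁ : A *ᵥ (A *ᵥ v) = (μ * μ) • v := by rw [hAv, mulVec_smul, hAv, smul_smul]
    have h₂ : A *ᵥ (A *ᵥ v) = (c * μ) • v := by rw [mulVec_mulVec, h, smul_mulVec, hAv, smul_smul]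
    rw [mul_sub, sub_smul, ← h₁, mul_comm μ c, ← h₂, sub_self]
  rcases mul_eq_zero.mp ((smul_eq_zero_iff_left hv).mp hμ) with hμ₀ | hμc
  · exact .inl hμ₀
  · exact .inr (sub_eq_zero.mp hμc)

/-- For `c ≤ 0` this holds only through the junk values `√c = 0` and `x / 0 = 0`. -/
theorem IsHermitian.sum_sqrt_eigenvalues_of_mul_self_eq_smul {A : Matrix ι ι 𝕜}
    (hA : A.IsHermitian) {c : ℝ} (h : A * A = c • A) :
    ∑ i, √(hA.eigenvalues i) = RCLike.re A.trace / √c := by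
  have hsqrt (i : ι) : √(hA.eigenvalues i) = hA.eigenvalues i / √c := by
    rcases hA.eigenvalues_eq_zero_or_eq_of_mul_self_eq_smul h i with hμ₀ | hμc
    · simp [hμ₀]
    · rw [hμc, Real.div_sqrt]
  simp [hsqrt, hA.trace_eq_sum_eigenvalues, Finset.sum_div]

end Spectrum

end Matrix

theorem nuclear_norm_pairwise_matrix_general (n : ℕ) (s : Fin n → ℝ)
    (hs : ∑ i, s i = 0) (e : Fin n → ℝ) (he : e = fun _ => 1)
    (Y : Matrix (Fin n) (Fin n) ℝ) (hY : Y = vecMulVec s e - vecMulVec e s)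
    (hYY : (Yᵀ * Y).IsHermitian) :
    ∑ i, Real.sqrt (hYY.eigenvalues i)
      = 2 * Real.sqrt n * Real.sqrt (∑ i, (s i) ^ 2) := by
  have hse : s ⬝ᵥ e = 0 := by simp [he, dotProduct, hs]
  have hee : e ⬝ᵥ e = n := by simp [he, dotProduct]
  have hss : s ⬝ᵥ s = ∑ i, s i ^ 2 := by simp [dotProduct, sq]
  have hgram := transpose_mul_self_vecMulVec_sub_vecMulVec hse
  rw [← hY] at hgram
  have hsq : (Yᵀ * Y) * (Yᵀ * Y) = ((s ⬝ᵥ s) * (e ⬝ᵥ e)) • (Yᵀ * Y) := by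
    rw [hgram]
    exact mul_self_smul_vecMulVec_add_smul_vecMulVec hse
  rw [hYY.sum_sqrt_eigenvalues_of_mul_self_eq_smul hsq, hgram,
    trace_smul_vecMulVec_add_smul_vecMulVec, RCLike.re_to_real, mul_div_assoc, Real.div_sqrt,
    hss, hee, Real.sqrt_mul' _ (Nat.cast_nonneg n)]
  ring

/-- The nuclear norm (sum of singular values) of `Y = s eᵀ - e sᵀ` with `sᵀe = 0`,
`s ≠ 0`, equals `2 √n ‖s‖₂`. -/
theorem nuclear_norm_pairwise_matrix (n : ℕ) (s : Fin n → ℝ)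
    (hs : ∑ i, s i = 0) (hs0 : s ≠ 0) (e : Fin n → ℝ) (he : e = fun _ => 1)
    (Y : Matrix (Fin n) (Fin n) ℝ) (hY : Y = vecMulVec s e - vecMulVec e s)
    (hYY : (Yᵀ * Y).IsHermitian) :
    ∑ i, Real.sqrt (hYY.eigenvalues i)
      = 2 * Real.sqrt n * Real.sqrt (∑ i, (s i) ^ 2) :=
  nuclear_norm_pairwise_matrix_general n s hs e he Y hY hYY
end

section
/- Let A be an n×n real skew-symmetric matrix whose singular values (in decreasing order with multiplicity) satisfy σ_k > σ_{k+1} for an even integer k = 2j. Then every best rank-k approximation of A in the Frobenius norm is also skew-symmetric. -/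
/-
Let `λ` be the eigenvalues of `AᵀA`. For an orthogonal projection `Q` with `Z Q = Z`,
Pythagoras gives `‖A - Z‖² = ‖A Q - Z‖² + tr(AᵀA) - tr(Q AᵀA)`. In an eigenbasis of `AᵀA`,
`tr(Q AᵀA) = ∑ qᵢ λᵢ` with `0 ≤ qᵢ ≤ 1` and `∑ qᵢ = rank Z ≤ k`, so it is at most the sum of
the `k` largest eigenvalues, and when `σ_k > σ_{k+1}` only the spectral projection `Q₀` onto the
top `k` eigenvectors attains that bound. Hence `A Q₀` is the unique best rank-`k` approximation.
As `A` is skew-symmetric, `Z ↦ -Zᵀ` preserves both the rank and the distance to `A`, so it fixes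
that unique minimiser.
-/

open Matrix

lemma eq_ite_mem_of_sum_le_sum_mul {ι : Type*} [Fintype ι] [DecidableEq ι] {S : Finset ι}
    {μ s : ι → ℝ} {c : ℝ} (hc : 0 ≤ c) (hS : ∀ i ∈ S, c < μ i) (hSc : ∀ i ∉ S, μ i ≤ c)
    (hs0 : ∀ i, 0 ≤ s i) (hs1 : ∀ i, s i ≤ 1) (hsum : ∑ i, s i ≤ S.card)
    (hle : ∑ i ∈ S, μ i ≤ ∑ i, s i * μ i) (i : ι) : s i = if i ∈ S then 1 else 0 := by
  have hsplit : ∀ f : ι → ℝ, ∑ i ∈ S, f i + ∑ i ∈ Sᶜ, f i = ∑ i, f i :=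
    fun f => Finset.sum_add_sum_compl S f
  -- All three summands are nonnegative, and the first vanishes only if `s = 1` on `S`.
  have hid : ∑ i ∈ S, μ i - ∑ i, s i * μ i = ∑ i ∈ S, (μ i - c) * (1 - s i)
      + ∑ i ∈ Sᶜ, (c - μ i) * s i + c * (S.card - ∑ i, s i) := by
    rw [← hsplit (fun i => s i * μ i), ← hsplit s]
    simp only [mul_sub, sub_mul, mul_one, Finset.sum_sub_distrib, mul_comm (s _) (μ _),
      ← Finset.mul_sum, Finset.sum_const, nsmul_eq_mul]
    ring
  have hin_nonneg : ∀ i ∈ S, 0 ≤ (μ i - c) * (1 - s i) := fun i hi =>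
    mul_nonneg (by linarith [hS i hi]) (by linarith [hs1 i])
  have hin : ∑ i ∈ S, (μ i - c) * (1 - s i) = 0 := by
    have hout_nonneg : 0 ≤ ∑ i ∈ Sᶜ, (c - μ i) * s i := Finset.sum_nonneg fun i hi =>
      mul_nonneg (by linarith [hSc i (Finset.mem_compl.mp hi)]) (hs0 i)
    have hslack : 0 ≤ c * (S.card - ∑ i, s i) := mul_nonneg hc (by linarith)
    linarith [Finset.sum_nonneg hin_nonneg]
  have hone : ∀ i ∈ S, s i = 1 := fun i hi => by
    have := (Finset.sum_eq_zero_iff_of_nonneg hin_nonneg).mp hin i hi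
    rcases mul_eq_zero.mp this with h | h <;> linarith [hS i hi]
  have hout : ∑ i ∈ Sᶜ, s i = 0 := by
    have : ∑ i ∈ S, s i = S.card := by simp [Finset.sum_congr rfl hone]
    linarith [hsplit s, Finset.sum_nonneg fun i (_ : i ∈ Sᶜ) => hs0 i]
  split_ifs with hi
  · exact hone i hi
  · exact (Finset.sum_eq_zero_iff_of_nonneg fun i _ => hs0 i).mp hout i (Finset.mem_compl.mpr hi)

namespace Matrix

lemma rank_neg {m n R : Type*} [Fintype n] [CommRing R] (M : Matrix m n R) :
    (-M).rank = M.rank := by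
  simpa using rank_smul_of_mem_nonZeroDivisors M isUnit_one.neg.mem_nonZeroDivisors

variable {m n : Type*} [Fintype m] [Fintype n]

lemma trace_conjStarAlgAut {R : Type*} [CommRing R] [StarRing R] [DecidableEq n]
    (u : unitary (Matrix n n R)) (M : Matrix n n R) :
    (Unitary.conjStarAlgAut R _ u M).trace = M.trace := by
  rw [Unitary.conjStarAlgAut_apply, trace_mul_cycle, Unitary.coe_star_mul_self, one_mul]

lemma trace_transpose_mul_self_nonneg (M : Matrix m n ℝ) : 0 ≤ (Mᵀ * M).trace := by
  rw [← conjTranspose_eq_transpose_of_trivial]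
  exact (posSemidef_conjTranspose_mul_self M).trace_nonneg

lemma trace_transpose_mul_self_eq_zero_iff {M : Matrix m n ℝ} : (Mᵀ * M).trace = 0 ↔ M = 0 := by
  rw [← conjTranspose_eq_transpose_of_trivial]
  exact trace_conjTranspose_mul_self_eq_zero_iff

section StarProjection
variable {P : Matrix n n ℝ}

lemma IsStarProjection.transpose_eq (hP : IsStarProjection P) : Pᵀ = P := by
  rw [← conjTranspose_eq_transpose_of_trivial]
  exact hP.isSelfAdjoint

lemma IsStarProjection.apply_self_eq_sum_sq (hP : IsStarProjection P) (i : n) :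
    P i i = ∑ j, P j i ^ 2 := by
  calc P i i = (Pᵀ * P) i i := by rw [hP.transpose_eq, hP.isIdempotentElem.eq]
    _ = ∑ j, P j i ^ 2 := by simp only [mul_apply, transpose_apply, sq]

lemma IsStarProjection.apply_self_nonneg (hP : IsStarProjection P) (i : n) : 0 ≤ P i i := by
  rw [hP.apply_self_eq_sum_sq]
  positivity

lemma IsStarProjection.apply_self_le_one (hP : IsStarProjection P) (i : n) : P i i ≤ 1 := by
  have : P i i ^ 2 ≤ P i i := by
    conv_rhs => rw [hP.apply_self_eq_sum_sq]
    exact Finset.single_le_sum (f := fun j => P j i ^ 2) (fun j _ => sq_nonneg _)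
      (Finset.mem_univ i)
  nlinarith [hP.apply_self_nonneg i]

lemma IsStarProjection.eq_diagonal [DecidableEq n] (hP : IsStarProjection P)
    (hdiag : ∀ i, P i i ^ 2 = P i i) : P = diagonal P.diag := by
  ext i j
  rcases eq_or_ne i j with rfl | hij
  · simp
  · have hsum : ∑ k ∈ Finset.univ.erase j, P k j ^ 2 = 0 := by
      have := hP.apply_self_eq_sum_sq j
      rw [← Finset.add_sum_erase _ _ (Finset.mem_univ j), hdiag] at this
      linarith
    have := (Finset.sum_eq_zero_iff_of_nonneg fun k _ => sq_nonneg (P k j)).mp hsum i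
      (Finset.mem_erase.mpr ⟨hij, Finset.mem_univ i⟩)
    simpa [hij] using this

lemma isStarProjection_diagonal_ite [DecidableEq n] (S : Finset n) :
    IsStarProjection (diagonal fun i => if i ∈ S then (1 : ℝ) else 0) := by
  refine ⟨?_, ?_⟩
  · simp [IsIdempotentElem, diagonal_mul_diagonal]
  · simp [IsSelfAdjoint, star_eq_conjTranspose]

end StarProjection

section Spectral
variable [DecidableEq n] {H : Matrix n n ℝ} (hH : H.IsHermitian)

noncomputable def IsHermitian.spectralProj (S : Finset n) : Matrix n n ℝ :=
  Unitary.conjStarAlgAut ℝ _ hH.eigenvectorUnitary (diagonal fun i => if i ∈ S then 1 else 0)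

lemma IsHermitian.eq_conj_diagonal_eigenvalues :
    H = Unitary.conjStarAlgAut ℝ _ hH.eigenvectorUnitary (diagonal hH.eigenvalues) := by
  conv_lhs => rw [hH.spectral_theorem]
  simp [RCLike.ofReal_real_eq_id]

lemma IsHermitian.isStarProjection_spectralProj (S : Finset n) :
    IsStarProjection (hH.spectralProj S) :=
  (isStarProjection_diagonal_ite S).map _

lemma IsHermitian.trace_spectralProj (S : Finset n) : (hH.spectralProj S).trace = S.card := by
  rw [spectralProj, trace_conjStarAlgAut, trace_diagonal]
  simp

lemma IsHermitian.rank_spectralProj_le (S : Finset n) : (hH.spectralProj S).rank ≤ S.card := by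
  rw [spectralProj, Unitary.conjStarAlgAut_apply]
  refine (rank_mul_le_left _ _).trans <| (rank_mul_le_right _ _).trans_eq ?_
  simp [rank_diagonal, Fintype.card_subtype]

lemma IsHermitian.trace_mul_eq_sum (Q : Matrix n n ℝ) :
    (Q * H).trace = ∑ i, (Unitary.conjStarAlgAut ℝ _ hH.eigenvectorUnitary).symm Q i i *
      hH.eigenvalues i := by
  set e := Unitary.conjStarAlgAut ℝ (Matrix n n ℝ) hH.eigenvectorUnitary
  conv_lhs => rw [← e.apply_symm_apply Q]; enter [1, 2]; rw [hH.eq_conj_diagonal_eigenvalues]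
  rw [← map_mul, trace_conjStarAlgAut, trace]
  simp [mul_diagonal]

lemma IsHermitian.trace_spectralProj_mul (S : Finset n) :
    (hH.spectralProj S * H).trace = ∑ i ∈ S, hH.eigenvalues i := by
  simp only [hH.trace_mul_eq_sum, spectralProj, StarAlgEquiv.symm_apply_apply, diagonal_apply_eq,
    ite_mul, one_mul, zero_mul, Finset.sum_ite_mem, Finset.univ_inter]

lemma IsHermitian.mul_spectralProj_of_eigenvalues_eq_zero {S : Finset n}
    (hS : ∀ i ∉ S, hH.eigenvalues i = 0) : H * hH.spectralProj S = H := by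
  conv_lhs => enter [1]; rw [hH.eq_conj_diagonal_eigenvalues]
  conv_rhs => rw [hH.eq_conj_diagonal_eigenvalues]
  rw [spectralProj, ← map_mul, diagonal_mul_diagonal]
  congr 2
  ext i
  by_cases hi : i ∈ S <;> simp [hi, hS]

/-- The equality case of Ky Fan's maximum principle, read in an eigenbasis of `H`. -/
lemma IsHermitian.eq_spectralProj_of_le_trace_mul {S : Finset n} {c : ℝ} (hc : 0 ≤ c)
    (hS : ∀ i ∈ S, c < hH.eigenvalues i) (hSc : ∀ i ∉ S, hH.eigenvalues i ≤ c)
    {Q : Matrix n n ℝ} (hQ : IsStarProjection Q) (htr : Q.trace ≤ S.card)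
    (hle : ∑ i ∈ S, hH.eigenvalues i ≤ (Q * H).trace) : Q = hH.spectralProj S := by
  set e := Unitary.conjStarAlgAut ℝ (Matrix n n ℝ) hH.eigenvectorUnitary
  have hP : IsStarProjection (e.symm Q) := hQ.map e.symm
  have hdiag : ∀ i, e.symm Q i i = if i ∈ S then 1 else 0 := by
    refine eq_ite_mem_of_sum_le_sum_mul hc hS hSc hP.apply_self_nonneg hP.apply_self_le_one ?_
      (hle.trans_eq (hH.trace_mul_eq_sum Q))
    calc ∑ i, e.symm Q i i = (e (e.symm Q)).trace := (trace_conjStarAlgAut _ _).symm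
      _ ≤ S.card := by rwa [e.apply_symm_apply]
  have hdiagonal : e.symm Q = diagonal fun i => if i ∈ S then 1 else 0 := by
    rw [hP.eq_diagonal fun i => by rw [hdiag]; split_ifs <;> norm_num]
    exact congrArg diagonal (funext hdiag)
  rw [spectralProj, ← hdiagonal, StarAlgEquiv.apply_symm_apply]

end Spectral

lemma trace_sub_transpose_mul_sub [DecidableEq n] (A : Matrix m n ℝ) {Z : Matrix m n ℝ}
    {Q : Matrix n n ℝ} (hQ : IsStarProjection Q) (hZQ : Z * Q = Z) :
    ((A - Z)ᵀ * (A - Z)).trace =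
      ((A * Q - Z)ᵀ * (A * Q - Z)).trace + (Aᵀ * A).trace - (Q * (Aᵀ * A)).trace := by
  have hR : IsStarProjection (1 - Q) := hQ.one_sub
  have hBR : (A * Q - Z) * (1 - Q) = 0 := by
    simp only [Matrix.sub_mul, Matrix.mul_sub, Matrix.mul_one, Matrix.mul_assoc,
      hQ.isIdempotentElem.eq, hZQ, sub_self]
  have hcross : ((A * Q - Z)ᵀ * (A * (1 - Q))).trace = 0 := by
    rw [← Matrix.mul_assoc, trace_mul_comm, ← Matrix.mul_assoc, ← hR.transpose_eq,
      ← transpose_mul, hBR]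
    simp
  have hrest : ((A * (1 - Q))ᵀ * (A * (1 - Q))).trace =
      (Aᵀ * A).trace - (Q * (Aᵀ * A)).trace := by
    rw [transpose_mul, hR.transpose_eq, ← Matrix.mul_assoc, trace_mul_comm, ← Matrix.mul_assoc,
      ← Matrix.mul_assoc, hR.isIdempotentElem.eq, Matrix.mul_assoc, Matrix.sub_mul,
      Matrix.one_mul, trace_sub]
  have hsplit : A - Z = (A * Q - Z) + A * (1 - Q) := by
    rw [Matrix.mul_sub, Matrix.mul_one]; abel
  rw [hsplit, transpose_add, Matrix.add_mul, Matrix.mul_add, Matrix.mul_add, trace_add, trace_add,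
    trace_add, ← trace_transpose ((A * (1 - Q))ᵀ * (A * Q - Z)), transpose_mul,
    transpose_transpose, hcross, hrest]
  ring

lemma exists_isStarProjection_mul_eq_self [DecidableEq n] (Z : Matrix m n ℝ) :
    ∃ Q : Matrix n n ℝ, IsStarProjection Q ∧ Z * Q = Z ∧ Q.trace = Z.rank := by
  have hZ : (Zᵀ * Z).IsHermitian := by
    simpa only [conjTranspose_eq_transpose_of_trivial] using isHermitian_conjTranspose_mul_self Z
  -- the projection onto the row space of `Z`, spanned by the eigenvectors of `Zᵀ * Z` with
  -- nonzero eigenvalue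
  set S := Finset.univ.filter fun i => hZ.eigenvalues i ≠ 0
  have hR : IsStarProjection (1 - hZ.spectralProj S) := (hZ.isStarProjection_spectralProj S).one_sub
  refine ⟨hZ.spectralProj S, hZ.isStarProjection_spectralProj S, ?_, ?_⟩
  · have hker : Zᵀ * Z * (1 - hZ.spectralProj S) = 0 := by
      rw [mul_sub, mul_one, hZ.mul_spectralProj_of_eigenvalues_eq_zero (by simp [S]), sub_self]
    have hsq : (Z * (1 - hZ.spectralProj S))ᵀ * (Z * (1 - hZ.spectralProj S)) = 0 := by
      rw [transpose_mul, hR.transpose_eq, Matrix.mul_assoc, ← Matrix.mul_assoc Zᵀ, hker,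
        Matrix.mul_zero]
    have := trace_transpose_mul_self_eq_zero_iff.mp (by rw [hsq, trace_zero])
    rwa [Matrix.mul_sub, Matrix.mul_one, sub_eq_zero, eq_comm] at this
  · rw [hZ.trace_spectralProj, ← rank_transpose_mul_self, hZ.rank_eq_card_non_zero_eigs,
      Fintype.card_subtype]

theorem eq_mul_spectralProj_of_forall_rank_le [DecidableEq n] (A : Matrix m n ℝ)
    (hAA : (Aᵀ * A).IsHermitian) {S : Finset n} {c : ℝ} (hc : 0 ≤ c)
    (hS : ∀ i ∈ S, c < hAA.eigenvalues i) (hSc : ∀ i ∉ S, hAA.eigenvalues i ≤ c)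
    {Z : Matrix m n ℝ} (hZ : Z.rank ≤ S.card)
    (hbest : ∀ W : Matrix m n ℝ, W.rank ≤ S.card →
      ((A - Z)ᵀ * (A - Z)).trace ≤ ((A - W)ᵀ * (A - W)).trace) :
    Z = A * hAA.spectralProj S := by
  obtain ⟨Q, hQ, hZQ, htrQ⟩ := exists_isStarProjection_mul_eq_self Z
  have hQ₀ := hAA.isStarProjection_spectralProj S
  have hcompare := hbest (A * hAA.spectralProj S)
    ((rank_mul_le_right _ _).trans (hAA.rank_spectralProj_le S))
  rw [trace_sub_transpose_mul_sub A hQ hZQ,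
    trace_sub_transpose_mul_sub A hQ₀ (by rw [Matrix.mul_assoc, hQ₀.isIdempotentElem.eq]),
    sub_self, transpose_zero, Matrix.zero_mul, trace_zero, hAA.trace_spectralProj_mul]
    at hcompare
  have hres := trace_transpose_mul_self_nonneg (A * Q - Z)
  obtain rfl : Q = hAA.spectralProj S := hAA.eq_spectralProj_of_le_trace_mul hc hS hSc hQ
    (by rw [htrQ]; exact_mod_cast hZ) (by linarith)
  rw [hAA.trace_spectralProj_mul] at hcompare
  exact (sub_eq_zero.mp (trace_transpose_mul_self_eq_zero_iff.mp (by linarith))).symm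

end Matrix

lemma frobNorm_eq_sqrt_trace {n : ℕ} (M : Matrix (Fin n) (Fin n) ℝ) :
    frobNorm M = √(Mᵀ * M).trace := by
  simp only [frobNorm, trace, diag, mul_apply, transpose_apply, sq]
  rw [Finset.sum_comm]

lemma frobNorm_le_frobNorm_iff {n : ℕ} {M N : Matrix (Fin n) (Fin n) ℝ} :
    frobNorm M ≤ frobNorm N ↔ (Mᵀ * M).trace ≤ (Nᵀ * N).trace := by
  rw [frobNorm_eq_sqrt_trace, frobNorm_eq_sqrt_trace,
    Real.sqrt_le_sqrt_iff (trace_transpose_mul_self_nonneg N)]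

lemma frobNorm_neg_transpose {n : ℕ} (M : Matrix (Fin n) (Fin n) ℝ) :
    frobNorm (-Mᵀ) = frobNorm M := by
  simp only [frobNorm, Matrix.neg_apply, transpose_apply, neg_sq]
  rw [Finset.sum_comm]

lemma exists_finset_card_eq_of_antitone {n k : ℕ} (hkn : k < n) (g : Equiv.Perm (Fin n))
    {μ : Fin n → ℝ} (hμ : ∀ i j, i ≤ j → μ (g j) ≤ μ (g i))
    (hgap : μ (g ⟨k, hkn⟩) < μ (g ⟨k - 1, (k.sub_le 1).trans_lt hkn⟩)) :
    ∃ S : Finset (Fin n), S.card = k ∧ (∀ i ∈ S, μ (g ⟨k, hkn⟩) < μ i) ∧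
      ∀ i ∉ S, μ i ≤ μ (g ⟨k, hkn⟩) := by
  refine ⟨(Finset.univ.filter fun j : Fin n => (j : ℕ) < k).map g.toEmbedding, ?_, ?_, ?_⟩
  · rw [Finset.card_map, Fin.card_filter_val_lt, min_eq_right hkn.le]
  · simp only [Finset.mem_map, Finset.mem_filter, Finset.mem_univ, true_and,
      Equiv.coe_toEmbedding]
    rintro _ ⟨j, hj, rfl⟩
    exact hgap.trans_le (hμ _ _ (Fin.le_iff_val_le_val.mpr (by dsimp only; omega)))
  · intro i hi
    obtain ⟨j, rfl⟩ := g.surjective i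
    refine hμ _ _ (Fin.le_iff_val_le_val.mpr ?_)
    by_contra! h
    exact hi (Finset.mem_map_of_mem _ (by simpa using h))

/-- The singular values `σ i = √(eigenvalues of AᵀA)` are listed in decreasing order through `g`,
with 0-based indices: `σ ⟨k - 1, _⟩` is the `k`-th largest. -/
theorem best_rank_k_approx_skew (n k : ℕ) (A : Matrix (Fin n) (Fin n) ℝ)
    (hA : Aᵀ = -A) (hAA : (Aᵀ * A).IsHermitian)
    (hkn : k < n)
    (g : Equiv.Perm (Fin n)) (σ : Fin n → ℝ)
    (hσ : σ = fun i => Real.sqrt (hAA.eigenvalues (g i)))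
    (hmono : ∀ i j : Fin n, i ≤ j → σ j ≤ σ i)
    (hsep : σ ⟨k, hkn⟩ < σ ⟨k - 1, by omega⟩)
    (X : Matrix (Fin n) (Fin n) ℝ) (hXr : X.rank ≤ k)
    (hXbest : ∀ Z : Matrix (Fin n) (Fin n) ℝ, Z.rank ≤ k →
      frobNorm (A - X) ≤ frobNorm (A - Z)) :
    Xᵀ = -X := by
  have hμ0 : ∀ i, 0 ≤ hAA.eigenvalues i := by
    have hpsd : (Aᵀ * A).PosSemidef := by
      simpa only [conjTranspose_eq_transpose_of_trivial] using posSemidef_conjTranspose_mul_self A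
    exact hpsd.eigenvalues_nonneg
  obtain ⟨S, hSk, hS, hSc⟩ := exists_finset_card_eq_of_antitone hkn g
    (fun i j hij => by simpa [hσ, Real.sqrt_le_sqrt_iff (hμ0 _)] using hmono i j hij)
    (by simpa [hσ, Real.sqrt_lt_sqrt_iff (hμ0 _)] using hsep)
  have hunique : ∀ Z : Matrix (Fin n) (Fin n) ℝ, Z.rank ≤ k →
      (∀ W : Matrix (Fin n) (Fin n) ℝ, W.rank ≤ k → frobNorm (A - Z) ≤ frobNorm (A - W)) →
      Z = A * hAA.spectralProj S := by
    intro Z hZ hbest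
    rw [← hSk] at hZ hbest
    exact eq_mul_spectralProj_of_forall_rank_le A hAA (hμ0 _) hS hSc hZ
      fun W hW => frobNorm_le_frobNorm_iff.mp (hbest W hW)
  have hflip : A - -Xᵀ = -(A - X)ᵀ := by rw [transpose_sub, hA]; abel
  have hX := hunique X hXr hXbest
  have hXt := hunique (-Xᵀ) (by rwa [rank_neg, rank_transpose]) fun W hW => by
    rw [hflip, frobNorm_neg_transpose]
    exact hXbest W hW
  simpa using congrArg transpose (hX.trans hXt.symm)
end

section
/- With A = i(s eᵀ - e sᵀ), sᵀe = 0, s ≠ 0, and the basis element K_{pq} = (i/√2)(e_p e_qᵀ - e_q e_pᵀ) for p < q, the quantity tr(sign(A) K_{pq})² equals 2(s_p - s_q)²/(n sᵀs), which is at most (2/n)ρ² where ρ = (max_i s_i - min_i s_i)/‖s‖₂. -/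
/-!
Only the entries `(q, p)` and `(p, q)` of `A` meet `K_{pq}`; they are `i(s_q - s_p)` and
`i(s_p - s_q)`, so `tr(A K_{pq}) = √2 (s_p - s_q)`. The bound is `|s_p - s_q| ≤ max s - min s`.
-/

open Matrix

namespace Matrix

theorem trace_mul_single_sub_single {n R : Type*} [Fintype n] [DecidableEq n] [Ring R]
    (M : Matrix n n R) (p q : n) :
    trace (M * (single p q 1 - single q p 1)) = M q p - M p q := by
  simp [mul_sub, trace_mul_single]

theorem vecMulVec_one_sub_one_vecMulVec_apply {n R : Type*} [Ring R] (s : n → R) (i j : n) :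
    (vecMulVec s (fun _ => 1) - vecMulVec (fun _ => 1) s : Matrix n n R) i j = s i - s j := by
  simp [vecMulVec_apply]

end Matrix

theorem trace_smul_skew_mul_smul_skew_basis {n : Type*} [Fintype n] [DecidableEq n]
    (s : n → ℝ) (c : ℝ) (p q : n) :
    trace (((c : ℂ) • Complex.I •
        (vecMulVec s (fun _ => 1) - vecMulVec (fun _ => 1) s).map Complex.ofReal) *
      ((Complex.I / ((√2 : ℝ) : ℂ)) • (single p q 1 - single q p 1))) =
      ((c * √2 * (s p - s q) : ℝ) : ℂ) := by
  have hsqrt2 : ((√2 : ℝ) : ℂ) ^ 2 = 2 := by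
    rw [← Complex.ofReal_pow, Real.sq_sqrt zero_le_two, Complex.ofReal_ofNat]
  have hsqrt2_ne : ((√2 : ℝ) : ℂ) ≠ 0 := by
    exact_mod_cast (Real.sqrt_pos.2 zero_lt_two).ne'
  rw [Matrix.smul_mul, Matrix.smul_mul, Matrix.mul_smul, trace_smul, trace_smul, trace_smul,
    trace_mul_single_sub_single]
  simp only [map_apply, vecMulVec_one_sub_one_vecMulVec_apply, smul_eq_mul]
  push_cast
  field_simp
  rw [Complex.I_sq, hsqrt2]
  ring

theorem sq_sub_le_sq_iSup_sub_iInf {ι : Type*} [Finite ι] (s : ι → ℝ) (i j : ι) :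
    (s i - s j) ^ 2 ≤ ((⨆ k, s k) - ⨅ k, s k) ^ 2 := by
  have hsup : ∀ k, s k ≤ ⨆ k, s k := le_ciSup (Set.finite_range s).bddAbove
  have hinf : ∀ k, ⨅ k, s k ≤ s k := ciInf_le (Set.finite_range s).bddBelow
  exact sq_le_sq' (by linarith [hsup j, hinf i]) (by linarith [hsup i, hinf j])

theorem coherence_skew_basis_general (n : ℕ) (s : Fin n → ℝ)
    (e : Fin n → ℝ) (he : e = fun _ => 1)
    (p q : Fin n)
    (A : Matrix (Fin n) (Fin n) ℂ)
    (hA : A = Complex.I • (vecMulVec s e - vecMulVec e s).map Complex.ofReal)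
    (S : Matrix (Fin n) (Fin n) ℂ)
    (hS : S = (((Real.sqrt (∑ i, s i ^ 2) * Real.sqrt n)⁻¹ : ℝ) : ℂ) • A)
    (K : Matrix (Fin n) (Fin n) ℂ)
    (hK : K = (Complex.I / ((Real.sqrt 2 : ℝ) : ℂ)) •
      (Matrix.single p q 1 - Matrix.single q p 1)) :
    (Matrix.trace (S * K)) ^ 2
        = ((2 * (s p - s q) ^ 2 / (n * ∑ i, s i ^ 2) : ℝ) : ℂ) ∧
      2 * (s p - s q) ^ 2 / (n * ∑ i, s i ^ 2)
        ≤ (2 / n) * (((⨆ i, s i) - ⨅ i, s i) / Real.sqrt (∑ i, s i ^ 2)) ^ 2 := by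
  subst he hA hS hK
  have hsumsq : 0 ≤ ∑ i, s i ^ 2 := by positivity
  constructor
  · rw [trace_smul_skew_mul_smul_skew_basis, ← Complex.ofReal_pow]
    congr 1
    rw [mul_pow, mul_pow, inv_pow, mul_pow, Real.sq_sqrt hsumsq, Real.sq_sqrt n.cast_nonneg,
      Real.sq_sqrt zero_le_two]
    ring
  · rw [div_pow, Real.sq_sqrt hsumsq, div_mul_div_comm]
    gcongr 2 * ?_ / _
    exact sq_sub_le_sq_iSup_sub_iInf s p q

/-- Coherence computation with the skew basis elements: for `p < q`,
`tr(sign(A) K_{pq})² = 2(s_p - s_q)²/(n sᵀs) ≤ (2/n) ρ²` where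
`ρ = (max_i s_i - min_i s_i)/‖s‖₂`. -/
theorem coherence_skew_basis (n : ℕ) (s : Fin n → ℝ)
    (hs : ∑ i, s i = 0) (hs0 : s ≠ 0) (e : Fin n → ℝ) (he : e = fun _ => 1)
    (p q : Fin n) (hpq : p < q)
    (A : Matrix (Fin n) (Fin n) ℂ)
    (hA : A = Complex.I • (vecMulVec s e - vecMulVec e s).map Complex.ofReal)
    (S : Matrix (Fin n) (Fin n) ℂ)
    (hS : S = (((Real.sqrt (∑ i, s i ^ 2) * Real.sqrt n)⁻¹ : ℝ) : ℂ) • A)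
    (K : Matrix (Fin n) (Fin n) ℂ)
    (hK : K = (Complex.I / ((Real.sqrt 2 : ℝ) : ℂ)) •
      (Matrix.single p q 1 - Matrix.single q p 1)) :
    (Matrix.trace (S * K)) ^ 2
        = ((2 * (s p - s q) ^ 2 / (n * ∑ i, s i ^ 2) : ℝ) : ℂ) ∧
      2 * (s p - s q) ^ 2 / (n * ∑ i, s i ^ 2)
        ≤ (2 / n) * (((⨆ i, s i) - ⨅ i, s i) / Real.sqrt (∑ i, s i ^ 2)) ^ 2 :=
  coherence_skew_basis_general n s e he p q A hA S hS K hK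
end
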